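/- Let C = {(x₁, x₂) ∈ ℝ² : x₁ ≥ 0, x₂ ≥ 0}, f₁(x, y) = x₂y₁ − x₁y₂, f₂(x, y) = x₁y₂ − x₂y₁, α₁ = α₂ = 1/2, and u = x¹ = (1, 1). Let {λ_k}, {μ_k}, {δ_k} ⊂ (0, 1) with λ_k + μ_k + δ_k = 1, and {ρ_k} ⊂ (0, 1). Let sequences {x^k}, {y^k} satisfy: x^1 = x¹; y^k ∈ C with (1/2) f₁(y^k, y) + (1/2) f₂(y^k, y) + (1/ρ_k)⟨y − y^k, y^k − x^k⟩ ≥ 0 for all y ∈ C; and x^{k+1} = λ_k u + μ_k x^k + δ_k y^k (the scheme of Statement 2.3). Then x^k = y^k = (1, 1) for every k ≥ 1, so {x^k} converges to (1, 1), which does not belong to Ω = Sol(C, f₁) ∩ Sol(C, f₂) = {(0, 0)}. -/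

import Mathlib

open Filter Topology RealInnerProductSpace

/-- The plane `ℝ²` as a Euclidean space. -/
abbrev E2 : Type := EuclideanSpace ℝ (Fin 2)

/-- The nonnegative quadrant `C = {(x₁,x₂) ∈ ℝ² : x₁ ≥ 0, x₂ ≥ 0}`. -/
def Quad : Set E2 := {p | 0 ≤ p 0 ∧ 0 ≤ p 1}

/-- `f₁(x,y) = x₂y₁ − x₁y₂`. -/
def f1 (x y : E2) : ℝ := x 1 * y 0 - x 0 * y 1

/-- `f₂(x,y) = x₁y₂ − x₂y₁`. -/
def f2 (x y : E2) : ℝ := x 0 * y 1 - x 1 * y 0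

/-- The point `x¹ = (1,1) ∈ ℝ²`. -/
def onePt : E2 := !₂[1, 1]

/-- The origin `(0,0) ∈ ℝ²`. -/
def zeroPt : E2 := !₂[0, 0]

/-- Solution set of the equilibrium problem `EP(C, f)`. -/
def Sol (C : Set E2) (f : E2 → E2 → ℝ) : Set E2 :=
  {x ∈ C | ∀ y ∈ C, 0 ≤ f x y}

/-!
The averaged bifunction `(1/2) f₁ + (1/2) f₂` vanishes identically, so the regularized
subproblem defining `yᵏ` reduces to projecting `xᵏ` onto `C`. Since `xᵏ = (1,1)` already lies
in `C`, the subproblem returns `yᵏ = xᵏ`, and the averaging step with anchor `u = (1,1)` returns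
`(1,1)` again. The scheme is therefore stationary at `(1,1)`, whereas the common solutions of
`f₁` and `f₂` are tested against the unit vectors and only the origin survives.
-/

/-- Testing with `w = x` leaves `-‖x - y‖² / ρ ≥ 0`. -/
theorem eq_of_forall_prox_ineq {F : Type*} [NormedAddCommGroup F] [InnerProductSpace ℝ F]
    {C : Set F} {g : F → F → ℝ} {ρ : ℝ} (hρ : 0 < ρ) {x y : F}
    (hx : x ∈ C) (hg : g y x = 0)
    (h : ∀ w ∈ C, 0 ≤ g y w + (1 / ρ) * ⟪w - y, y - x⟫) : y = x := by
  have hxy := h x hx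
  rw [hg, zero_add, ← neg_sub x y, inner_neg_right, real_inner_self_eq_norm_sq] at hxy
  have hnorm : ‖x - y‖ ^ 2 ≤ 0 := by
    have := one_div_pos.mpr hρ
    nlinarith
  simpa [sub_eq_zero, eq_comm] using hnorm

theorem half_f1_add_half_f2 (x y : E2) : (1 / 2) * f1 x y + (1 / 2) * f2 x y = 0 := by
  simp only [f1, f2]
  ring

theorem onePt_mem_quad : onePt ∈ Quad := by
  constructor <;> norm_num [onePt]

theorem onePt_ne_zeroPt : onePt ≠ zeroPt := by
  intro h
  simpa [onePt, zeroPt] using congrArg (fun v : E2 => v 0) h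

theorem sol_f1_inter_sol_f2 : Sol Quad f1 ∩ Sol Quad f2 = {zeroPt} := by
  ext p
  constructor
  · rintro ⟨⟨-, h1⟩, ⟨-, h2⟩⟩
    have he0 : (!₂[1, 0] : E2) ∈ Quad := by constructor <;> norm_num
    have he1 : (!₂[0, 1] : E2) ∈ Quad := by constructor <;> norm_num
    have h1a := h1 _ he0
    have h2a := h2 _ he0
    have h1b := h1 _ he1
    have h2b := h2 _ he1
    simp only [f1, f2, Matrix.cons_val_zero, Matrix.cons_val_one] at h1a h2a h1b h2b
    have hp0 : p 0 = 0 := by linarith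
    have hp1 : p 1 = 0 := by linarith
    ext i
    fin_cases i <;> simp [zeroPt, hp0, hp1]
  · rintro rfl
    have hzero : zeroPt ∈ Quad := by constructor <;> simp [zeroPt]
    exact ⟨⟨hzero, fun w _ => by simp [f1, zeroPt]⟩, ⟨hzero, fun w _ => by simp [f2, zeroPt]⟩⟩

theorem statement_2_3_counterexample_general
    (lam mu delta ρ : ℕ → ℝ)
    (hsum : ∀ k, lam k + mu k + delta k = 1)
    (hρ : ∀ k, ρ k ∈ Set.Ioo (0 : ℝ) 1)
    (x y : ℕ → E2)
    (hx1 : x 1 = onePt)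
    (hy : ∀ k ≥ 1, y k ∈ Quad ∧ ∀ w ∈ Quad,
      0 ≤ (1 / 2) * f1 (y k) w + (1 / 2) * f2 (y k) w +
        (1 / ρ k) * ⟪w - y k, y k - x k⟫)
    (hxk : ∀ k ≥ 1, x (k + 1) = (lam k • onePt + mu k • x k + delta k • y k : E2)) :
    (∀ k ≥ 1, x k = onePt ∧ y k = onePt) ∧
    Filter.Tendsto x Filter.atTop (𝓝 onePt) ∧
    Sol Quad f1 ∩ Sol Quad f2 = {zeroPt} ∧
    onePt ∉ Sol Quad f1 ∩ Sol Quad f2 := by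
  have hy_eq : ∀ k ≥ 1, x k = onePt → y k = onePt := fun k hk hx => by
    rw [← hx]
    exact eq_of_forall_prox_ineq (g := fun a b => (1 / 2) * f1 a b + (1 / 2) * f2 a b)
      (hρ k).1 (hx ▸ onePt_mem_quad) (half_f1_add_half_f2 _ _) (hy k hk).2
  have hstat : ∀ k ≥ 1, x k = onePt ∧ y k = onePt := by
    intro k hk
    induction k, hk using Nat.le_induction with
    | base => exact ⟨hx1, hy_eq 1 le_rfl hx1⟩
    | succ k hk ih =>
      have hx : x (k + 1) = onePt := by
        rw [hxk k hk, ih.1, ih.2, ← add_smul, ← add_smul, hsum k, one_smul]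
      exact ⟨hx, hy_eq (k + 1) (by omega) hx⟩
  refine ⟨hstat, ?_, sol_f1_inter_sol_f2, ?_⟩
  · refine tendsto_const_nhds.congr' ?_
    filter_upwards [eventually_ge_atTop 1] with k hk
    exact (hstat k hk).1.symm
  · rw [sol_f1_inter_sol_f2]
    exact onePt_ne_zeroPt

/-- the scheme of Statement 2.3 with `u = x¹ = (1,1)` applied to
the combination `(1/2)f₁ + (1/2)f₂` stays at `(1,1)` forever, hence converges
to `(1,1) ∉ Ω = Sol(C,f₁) ∩ Sol(C,f₂) = {(0,0)}`. -/
theorem statement_2_3_counterexample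
    (lam mu delta ρ : ℕ → ℝ)
    (hlam : ∀ k, lam k ∈ Set.Ioo (0 : ℝ) 1)
    (hmu : ∀ k, mu k ∈ Set.Ioo (0 : ℝ) 1)
    (hdelta : ∀ k, delta k ∈ Set.Ioo (0 : ℝ) 1)
    (hsum : ∀ k, lam k + mu k + delta k = 1)
    (hρ : ∀ k, ρ k ∈ Set.Ioo (0 : ℝ) 1)
    (x y : ℕ → E2)
    (hx1 : x 1 = onePt)
    (hy : ∀ k ≥ 1, y k ∈ Quad ∧ ∀ w ∈ Quad,
      0 ≤ (1 / 2) * f1 (y k) w + (1 / 2) * f2 (y k) w +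
        (1 / ρ k) * ⟪w - y k, y k - x k⟫)
    (hxk : ∀ k ≥ 1, x (k + 1) = (lam k • onePt + mu k • x k + delta k • y k : E2)) :
    (∀ k ≥ 1, x k = onePt ∧ y k = onePt) ∧
    Filter.Tendsto x Filter.atTop (𝓝 onePt) ∧
    Sol Quad f1 ∩ Sol Quad f2 = {zeroPt} ∧
    onePt ∉ Sol Quad f1 ∩ Sol Quad f2 :=
  statement_2_3_counterexample_general lam mu delta ρ hsum hρ x y hx1 hy hxk
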